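/- The function d(x,y) = 1 - IoU(x,y) on nonempty finite measurable sets (bounding boxes) is a metric: it is nonnegative, d(x,y) = 0 iff x = y up to null sets, symmetric, and satisfies the triangle inequality. -/
import Mathlib


open MeasureTheory
open scoped symmDiff

/-- Jaccard distance `1 - IoU` w.r.t. a measure `μ`. -/
noncomputable def jaccardDist {α : Type*} [MeasurableSpace α] (μ : Measure α)
    (x y : Set α) : ℝ :=
  1 - (μ (x ∩ y)).toReal / (μ (x ∪ y)).toReal

private lemma union_eq_inter_add_symmDiff {α : Type*} [MeasurableSpace α] (μ : Measure α)
    {x y : Set α} (hx : MeasurableSet x) (hy : MeasurableSet y) :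
    μ (x ∪ y) = μ (x ∩ y) + μ (x ∆ y) := by
  rw [← measure_union (by
    simp [Set.disjoint_left, Set.mem_symmDiff]; tauto) (hx.symmDiff hy)]
  congr 1
  ext a
  simp [Set.mem_symmDiff]; tauto

/-- `1 - IoU` is a metric on measurable sets of finite positive measure,
modulo null sets: it is nonnegative, vanishes exactly on pairs equal up to a
null set, is symmetric, and satisfies the triangle inequality. -/
theorem jaccardDist_is_metric {α : Type*} [MeasurableSpace α] (μ : Measure α)
    (x y z : Set α)
    (hx : MeasurableSet x) (hy : MeasurableSet y) (hz : MeasurableSet z)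
    (hxf : μ x < ⊤) (hyf : μ y < ⊤) (hzf : μ z < ⊤)
    (hxp : 0 < μ x) (hyp : 0 < μ y) (hzp : 0 < μ z) :
    0 ≤ jaccardDist μ x y ∧
    (jaccardDist μ x y = 0 ↔ x =ᵐ[μ] y) ∧
    jaccardDist μ x y = jaccardDist μ y x ∧
    jaccardDist μ x y ≤ jaccardDist μ x z + jaccardDist μ z y := by
  -- finiteness of unions
  have hxy : μ (x ∪ y) ≠ ⊤ := (measure_union_lt_top hxf hyf).ne
  have hxz : μ (x ∪ z) ≠ ⊤ := (measure_union_lt_top hxf hzf).ne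
  have hzy : μ (z ∪ y) ≠ ⊤ := (measure_union_lt_top hzf hyf).ne
  -- finiteness of intersections and symmetric differences
  have hixy : μ (x ∩ y) ≠ ⊤ := ne_top_of_le_ne_top hxy (measure_mono (by
    exact Set.Subset.trans Set.inter_subset_left Set.subset_union_left))
  have hixz : μ (x ∩ z) ≠ ⊤ := ne_top_of_le_ne_top hxz (measure_mono (by
    exact Set.Subset.trans Set.inter_subset_left Set.subset_union_left))
  have hizy : μ (z ∩ y) ≠ ⊤ := ne_top_of_le_ne_top hzy (measure_mono (by
    exact Set.Subset.trans Set.inter_subset_left Set.subset_union_left))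
  have hdxy : μ (x ∆ y) ≠ ⊤ := ne_top_of_le_ne_top hxy (measure_mono symmDiff_le_sup)
  have hdxz : μ (x ∆ z) ≠ ⊤ := ne_top_of_le_ne_top hxz (measure_mono symmDiff_le_sup)
  have hdzy : μ (z ∆ y) ≠ ⊤ := ne_top_of_le_ne_top hzy (measure_mono symmDiff_le_sup)
  -- positivity of unions (real)
  have huxy : (0 : ℝ) < (μ (x ∪ y)).toReal :=
    ENNReal.toReal_pos (lt_of_lt_of_le hxp (measure_mono Set.subset_union_left)).ne' hxy
  have huxz : (0 : ℝ) < (μ (x ∪ z)).toReal :=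
    ENNReal.toReal_pos (lt_of_lt_of_le hxp (measure_mono Set.subset_union_left)).ne' hxz
  have huzy : (0 : ℝ) < (μ (z ∪ y)).toReal :=
    ENNReal.toReal_pos (lt_of_lt_of_le hzp (measure_mono Set.subset_union_left)).ne' hzy
  -- decompositions
  have dxy : (μ (x ∪ y)).toReal = (μ (x ∩ y)).toReal + (μ (x ∆ y)).toReal := by
    rw [union_eq_inter_add_symmDiff μ hx hy, ENNReal.toReal_add hixy hdxy]
  have dxz : (μ (x ∪ z)).toReal = (μ (x ∩ z)).toReal + (μ (x ∆ z)).toReal := by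
    rw [union_eq_inter_add_symmDiff μ hx hz, ENNReal.toReal_add hixz hdxz]
  have dzy : (μ (z ∪ y)).toReal = (μ (z ∩ y)).toReal + (μ (z ∆ y)).toReal := by
    rw [union_eq_inter_add_symmDiff μ hz hy, ENNReal.toReal_add hizy hdzy]
  -- jaccardDist as symmDiff over union
  have exy : jaccardDist μ x y = (μ (x ∆ y)).toReal / (μ (x ∪ y)).toReal := by
    unfold jaccardDist
    rw [eq_div_iff huxy.ne', sub_mul, one_mul, div_mul_cancel₀ _ huxy.ne']
    linarith [dxy]
  have exz : jaccardDist μ x z = (μ (x ∆ z)).toReal / (μ (x ∪ z)).toReal := by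
    unfold jaccardDist
    rw [eq_div_iff huxz.ne', sub_mul, one_mul, div_mul_cancel₀ _ huxz.ne']
    linarith [dxz]
  have ezy : jaccardDist μ z y = (μ (z ∆ y)).toReal / (μ (z ∪ y)).toReal := by
    unfold jaccardDist
    rw [eq_div_iff huzy.ne', sub_mul, one_mul, div_mul_cancel₀ _ huzy.ne']
    linarith [dzy]
  refine ⟨?_, ?_, ?_, ?_⟩
  · rw [exy]; positivity
  · rw [exy, div_eq_zero_iff, ← measure_symmDiff_eq_zero_iff (μ := μ)]
    constructor
    · rintro (h | h)
      · exact (ENNReal.toReal_eq_zero_iff _).mp h |>.resolve_right hdxy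
      · exact absurd h huxy.ne'
    · intro h
      left; simp [h]
  · unfold jaccardDist; rw [Set.inter_comm, Set.union_comm]
  · rw [exy, exz, ezy, dxy, dxz, dzy]
    -- shorthand
    set A := (μ (x ∆ y)).toReal with hA
    set B := (μ (x ∆ z)).toReal with hB
    set C := (μ (z ∆ y)).toReal with hC
    set p := (μ (x ∩ y)).toReal with hp
    set q := (μ (x ∩ z)).toReal with hq
    set r := (μ (z ∩ y)).toReal with hr
    have hA0 : 0 ≤ A := ENNReal.toReal_nonneg
    have hB0 : 0 ≤ B := ENNReal.toReal_nonneg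
    have hC0 : 0 ≤ C := ENNReal.toReal_nonneg
    have hp0 : 0 ≤ p := ENNReal.toReal_nonneg
    have hq0 : 0 ≤ q := ENNReal.toReal_nonneg
    have hr0 : 0 ≤ r := ENNReal.toReal_nonneg
    have h1 : 0 < p + A := by rw [hp, hA, ← dxy]; exact huxy
    have h2 : 0 < q + B := by rw [hq, hB, ← dxz]; exact huxz
    have h3 : 0 < r + C := by rw [hr, hC, ← dzy]; exact huzy
    -- triangle inequality for symmetric differences
    have tri : A ≤ B + C := by
      rw [hA, hB, hC, ← ENNReal.toReal_add hdxz hdzy]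
      exact ENNReal.toReal_mono (by simp [hdxz, hdzy]) (measure_symmDiff_le x z y)
    -- inclusion facts
    have hq' : q ≤ p + C := by
      rw [hq, hp, hC, ← ENNReal.toReal_add hixy hdzy]
      refine ENNReal.toReal_mono (by simp [hixy, hdzy]) ?_
      refine le_trans (measure_mono ?_) (measure_union_le _ _)
      intro a ha
      by_cases hay : a ∈ y <;> simp_all [Set.mem_symmDiff] <;> tauto
    have hr' : r ≤ p + B := by
      rw [hr, hp, hB, ← ENNReal.toReal_add hixy hdxz]
      refine ENNReal.toReal_mono (by simp [hixy, hdxz]) ?_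
      refine le_trans (measure_mono ?_) (measure_union_le _ _)
      intro a ha
      by_cases hax : a ∈ x <;> simp_all [Set.mem_symmDiff] <;> tauto
    -- algebra
    have hD : 0 < p + (B + C) := by linarith
    have step1 : A / (p + A) ≤ (B + C) / (p + (B + C)) := by
      rw [div_le_div_iff₀ h1 hD]
      nlinarith
    have step2 : (B + C) / (p + (B + C)) = B / (p + (B + C)) + C / (p + (B + C)) :=
      add_div _ _ _
    have step3 : B / (p + (B + C)) ≤ B / (q + B) := by
      apply div_le_div_of_nonneg_left hB0 h2
      linarith
    have step4 : C / (p + (B + C)) ≤ C / (r + C) := by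
      apply div_le_div_of_nonneg_left hC0 h3
      linarith
    linarith
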